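/- arXiv:1110.2014 — 2 statements merged into one kernel-verified Lean document; each statement's English description precedes it below -/
import Mathlib

section
/- Let t ≥ 100 be a real number, and let P, Q be real numbers satisfying t + 2P ≥ 0 and P² + Q² ≤ t⁴/4. Then |1 - 1/t - (P + iQ)/t² + (P + iQ)²/t⁴| + (1/(4t^{3/2}))·(t + 2P)^{1/2} ≤ 1, where the absolute value is of a complex number. -/
/-!
Normalise by `s = 1/t` and `w = (P + iQ)/t²`, so that the complex number is `1 - s - w + w²`
with `|w| ≤ 1/2`, and the second term is `√(s(s + 2 Re w))/4`. A polynomial inequality bounds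
`|1 - s - w + w²|²` by `1 - (s + Re w)/2 + s(s + 2 Re w)/16`, and AM-GM gives
`√(s(s + 2 Re w)) ≤ s + Re w`, so this is at most `(1 - √(s(s + 2 Re w))/4)²`.
-/

open Complex

theorem pichorides_polynomial_bound {s p q : ℝ} (hs : 0 ≤ s) (hs_small : s ≤ 1 / 100)
    (hsp : 0 ≤ s + 2 * p) (hpq : p ^ 2 + q ^ 2 ≤ 1 / 4) :
    16 * (1 - s - p + p ^ 2 - q ^ 2) ^ 2 + 16 * q ^ 2 * (1 - 2 * p) ^ 2 ≤
      16 - 8 * s - 8 * p + s ^ 2 + 2 * p * s := by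
  nlinarith [sq_nonneg q, sq_nonneg p, sq_nonneg (p + q), sq_nonneg (p - q),
    sq_nonneg (p ^ 2 + q ^ 2), sq_nonneg (1 - 2 * p), sq_nonneg (s + 2 * p), mul_nonneg hs hsp,
    sq_nonneg (p ^ 2 + q ^ 2 - 1 / 4), mul_nonneg (mul_nonneg hs hs) hsp, sq_nonneg (s + p)]

theorem normSq_one_sub_sub_add_sq_le {s : ℝ} {w : ℂ} (hs : 0 ≤ s) (hs_small : s ≤ 1 / 100)
    (hsw : 0 ≤ s + 2 * w.re) (hw : ‖w‖ ≤ 1 / 2) :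
    normSq (1 - s - w + w ^ 2) ≤ 1 - (s + w.re) / 2 + s * (s + 2 * w.re) / 16 := by
  have hpq : w.re ^ 2 + w.im ^ 2 ≤ 1 / 4 := by
    have := pow_le_pow_left₀ (norm_nonneg w) hw 2
    rw [Complex.sq_norm, normSq_apply] at this
    linarith
  have key := pichorides_polynomial_bound hs hs_small hsw hpq
  simp only [normSq_apply, sub_re, add_re, sub_im, add_im, one_re, one_im, ofReal_re,
    ofReal_im, pow_two, mul_re, mul_im]
  nlinarith

theorem Real.sqrt_mul_le_add_div_two {a b : ℝ} (ha : 0 ≤ a) (hb : 0 ≤ b) :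
    √(a * b) ≤ (a + b) / 2 :=
  Real.sqrt_le_iff.mpr ⟨by positivity, by nlinarith [sq_nonneg (a - b)]⟩

theorem norm_one_sub_sub_add_sq_add_sqrt_le_one {s : ℝ} {w : ℂ} (hs : 0 ≤ s)
    (hs_small : s ≤ 1 / 100) (hsw : 0 ≤ s + 2 * w.re) (hw : ‖w‖ ≤ 1 / 2) :
    ‖1 - s - w + w ^ 2‖ + √(s * (s + 2 * w.re)) / 4 ≤ 1 := by
  set D := √(s * (s + 2 * w.re)) / 4 with hD_def
  have hre : w.re ≤ 1 / 2 := (re_le_norm w).trans hw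
  have hD : D ≤ (s + w.re) / 4 := by
    have := Real.sqrt_mul_le_add_div_two hs hsw
    rw [hD_def]
    linarith
  have hD_sq : D ^ 2 = s * (s + 2 * w.re) / 16 := by
    rw [hD_def, div_pow, Real.sq_sqrt (mul_nonneg hs hsw)]
    norm_num
  have hsq : ‖1 - s - w + w ^ 2‖ ^ 2 ≤ (1 - D) ^ 2 := by
    rw [Complex.sq_norm]
    nlinarith [normSq_one_sub_sub_add_sq_le hs hs_small hsw hw]
  have := (pow_le_pow_iff_left₀ (norm_nonneg _) (by linarith) two_ne_zero).mp hsq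
  linarith

theorem Real.rpow_three_halves_eq_sqrt_pow_three {t : ℝ} (ht : 0 ≤ t) :
    t ^ ((3 : ℝ) / 2) = √(t ^ 3) := by
  rw [Real.sqrt_eq_rpow, ← Real.rpow_natCast, ← Real.rpow_mul ht]
  norm_num

/-- Pichorides's elementary inequality (Lemma 1 of Pichorides). -/
theorem pichorides_inequality (t P Q : ℝ) (ht : 100 ≤ t) (h1 : 0 ≤ t + 2 * P)
    (h2 : P ^ 2 + Q ^ 2 ≤ t ^ 4 / 4) :
    ‖(1 - 1 / (t : ℂ) - ((P : ℂ) + (Q : ℂ) * Complex.I) / (t : ℂ) ^ 2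
        + ((P : ℂ) + (Q : ℂ) * Complex.I) ^ 2 / (t : ℂ) ^ 4)‖
      + (1 / (4 * t ^ ((3 : ℝ) / 2))) * (t + 2 * P) ^ ((1 : ℝ) / 2) ≤ 1 := by
  have ht0 : 0 < t := by linarith
  set w : ℂ := (P + Q * I) / (t : ℂ) ^ 2 with hw_def
  have hw_re : w.re = P / t ^ 2 := by simp [hw_def, ← ofReal_pow, div_ofReal_re]
  have hw : ‖w‖ ≤ 1 / 2 := by
    have hPQ : ‖(P + Q * I : ℂ)‖ ≤ t ^ 2 / 2 :=
      (norm_add_mul_I P Q).trans_le (Real.sqrt_le_iff.mpr ⟨by positivity, by linarith⟩)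
    rw [norm_div, norm_pow, norm_real, Real.norm_of_nonneg ht0.le, div_le_iff₀ (by positivity)]
    linarith
  have hsw : 1 / t + 2 * w.re = (t + 2 * P) / t ^ 2 := by
    rw [hw_re]; field_simp
  have hz : 1 - 1 / (t : ℂ) - (P + Q * I) / (t : ℂ) ^ 2 + (P + Q * I) ^ 2 / (t : ℂ) ^ 4
      = 1 - ((1 / t : ℝ) : ℂ) - w + w ^ 2 := by
    have : (t : ℂ) ≠ 0 := by exact_mod_cast ht0.ne'
    rw [hw_def]; push_cast; field_simp
  have hδ : 1 / (4 * t ^ ((3 : ℝ) / 2)) * (t + 2 * P) ^ ((1 : ℝ) / 2)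
      = √(1 / t * (1 / t + 2 * w.re)) / 4 := by
    rw [Real.rpow_three_halves_eq_sqrt_pow_three ht0.le, ← Real.sqrt_eq_rpow, hsw,
      show 1 / t * ((t + 2 * P) / t ^ 2) = (t + 2 * P) / t ^ 3 by field_simp, Real.sqrt_div h1]
    ring
  rw [hz, hδ]
  refine norm_one_sub_sub_add_sq_add_sqrt_le_one (by positivity) ?_ ?_ hw
  · rw [div_le_div_iff₀ ht0 (by norm_num)]; linarith
  · rw [hsw]; positivity
end

section
/- Let Φ₁, …, Φ_t : 𝕋^d → ℂ be measurable functions with ‖Φ_j‖_∞ ≤ 1 for all j, let g : 𝕋^d → ℂ satisfy ‖g‖_∞ ≤ 1, and let t ≥ 100 be an integer. Define W(x) = ∑_{1≤i<j≤t} Φ_i(x)·conj(Φ_j(x)) and h(x) = g(x)·(1 − 1/t − W(x)/t² + W(x)²/t⁴) + (1/(4t^{3/2}))·∑_{j=1}^t Φ_j(x). Then ‖h‖_∞ ≤ 1. -/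
/-!
Write `ε = 1/t` and `z = W/t² = p + iq`, so that `|z| ≤ 1/2` by counting pairs and
`|∑ Φ_j|² = ∑ |Φ_j|² + 2 Re W ≤ t + 2 Re W`. The multiplier of `g` is `1 - ε - z + z²`, whose
modulus is at most `1 - ε - p + p²` because the imaginary part `q` only decreases it; the second
term is at most `√(ε (ε + 2p)) / 4 ≤ (ε + p) / 4 ≤ ε + p - p²` by AM-GM. The two bounds add up
to `1`.
-/

open Finset ComplexConjugate

theorem Fintype.sum_prod_eq_sum_diag_add_sum_lt {ι M : Type*} [Fintype ι] [LinearOrder ι]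
    [AddCommMonoid M] (f : ι × ι → M) :
    ∑ p, f p = ∑ i, f (i, i) + ∑ p : ι × ι with p.1 < p.2, (f p + f p.swap) := by
  have hsplit : ∀ p : ι × ι, f p = (if p.1 = p.2 then f p else 0)
      + ((if p.1 < p.2 then f p else 0) + if p.2 < p.1 then f p else 0) := by
    rintro ⟨i, j⟩
    rcases lt_trichotomy i j with h | rfl | h
    · simp [h, h.ne, h.not_gt]
    · simp
    · simp [h, h.ne', h.not_gt]
  have hswap : ∑ p : ι × ι, (if p.2 < p.1 then f p else 0)
      = ∑ p : ι × ι, (if p.1 < p.2 then f p.swap else 0) :=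
    Fintype.sum_equiv (Equiv.prodComm ι ι) _ _ fun p => rfl
  rw [Fintype.sum_congr _ _ hsplit, sum_add_distrib, sum_add_distrib, hswap, ← sum_add_distrib,
    sum_filter]
  simp_rw [ite_add_ite, add_zero, Fintype.sum_prod_type, sum_ite_eq]

theorem RCLike.norm_sum_sq_eq {𝕜 ι : Type*} [RCLike 𝕜] [Fintype ι] [LinearOrder ι] (z : ι → 𝕜) :
    ‖∑ i, z i‖ ^ 2 = ∑ i, ‖z i‖ ^ 2
      + 2 * re (∑ p : ι × ι with p.1 < p.2, z p.1 * conj (z p.2)) := by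
  have hnorm (w : 𝕜) : ‖w‖ ^ 2 = re (w * conj w) := by rw [RCLike.mul_conj, ← ofReal_pow, ofReal_re]
  have hswap (p : ι × ι) : re (z p.2 * conj (z p.1)) = re (z p.1 * conj (z p.2)) := by
    rw [← conj_re, map_mul, conj_conj, mul_comm]
  calc ‖∑ i, z i‖ ^ 2 = ∑ p : ι × ι, re (z p.1 * conj (z p.2)) := by
        rw [hnorm, map_sum, sum_mul_sum, ← Fintype.sum_prod_type', map_sum]
    _ = _ := by
        rw [Fintype.sum_prod_eq_sum_diag_add_sum_lt, map_sum, mul_sum]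
        simp only [Prod.fst_swap, Prod.snd_swap, hswap, ← hnorm, two_mul]

theorem RCLike.norm_sum_lt_mul_conj_le {𝕜 ι : Type*} [RCLike 𝕜] [Fintype ι] [LinearOrder ι]
    {z : ι → 𝕜} (hz : ∀ i, ‖z i‖ ≤ 1) :
    ‖∑ p : ι × ι with p.1 < p.2, z p.1 * conj (z p.2)‖ ≤ (Fintype.card ι : ℝ) ^ 2 / 2 := by
  have hterm (p : ι × ι) : ‖z p.1 * conj (z p.2)‖ ≤ 1 := by
    rw [norm_mul, RCLike.norm_conj]
    exact mul_le_one₀ (hz _) (norm_nonneg _) (hz _)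
  calc _ ≤ ∑ p : ι × ι with p.1 < p.2, (1 : ℝ) := norm_sum_le_of_le _ fun p _ => hterm p
    _ = (Fintype.card ι : ℝ) * (Fintype.card ι - 1) / 2 := by
        rw [sum_const, Fintype.card_product_filter_lt, nsmul_one, Nat.cast_choose_two]
    _ ≤ _ := by nlinarith [Nat.cast_nonneg (α := ℝ) (Fintype.card ι)]

theorem norm_one_sub_sub_add_sq_le {ε : ℝ} {z : ℂ} (hε : ε ≤ 1 / 8) (hz : ‖z‖ ≤ 1 / 2)
    (hεz : 0 ≤ ε + 2 * z.re) :
    ‖(1 - ε - z + z ^ 2 : ℂ)‖ ≤ 1 - ε - z.re + z.re ^ 2 := by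
  have hpq : z.re ^ 2 + z.im ^ 2 ≤ 1 / 4 := by
    have := Complex.sq_norm z
    rw [Complex.normSq_apply] at this
    nlinarith [norm_nonneg z]
  have hu : 0 ≤ 1 - ε - z.re + z.re ^ 2 := by nlinarith
  -- With `u` the right-hand side and `z = p + iq`:
  -- `‖1 - ε - z + z²‖² = u² - q² (2u - q² - (2p - 1)²)`.
  have hneg : z.im ^ 2 + 2 * z.re ^ 2 - 2 * z.re - 1 + 2 * ε ≤ 0 := by nlinarith
  rw [← pow_le_pow_iff_left₀ (norm_nonneg _) hu two_ne_zero, Complex.sq_norm, Complex.normSq_apply]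
  simp only [sq, Complex.add_re, Complex.sub_re, Complex.one_re, Complex.ofReal_re, Complex.mul_re,
    Complex.add_im, Complex.sub_im, Complex.one_im, Complex.ofReal_im, sub_self, zero_sub,
    Complex.mul_im]
  nlinarith [mul_nonneg (sq_nonneg z.im) (neg_nonneg.2 hneg)]

theorem sqrt_mul_add_two_mul_div_four_le {ε p : ℝ} (hε : 0 ≤ ε) (hε₁ : ε ≤ 1) (hp : p ≤ 1 / 2)
    (hεp : 0 ≤ ε + 2 * p) :
    √(ε * (ε + 2 * p)) / 4 ≤ ε + p - p ^ 2 := by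
  have hamgm : √(ε * (ε + 2 * p)) ≤ ε + p :=
    Real.sqrt_le_iff.2 ⟨by linarith, by nlinarith [sq_nonneg p]⟩
  nlinarith

theorem pichorides_inequality_s11 {t : ℝ} (ht : 8 ≤ t) {w : ℂ} (hw : ‖w‖ ≤ t ^ 2 / 2)
    (hre : 0 ≤ t + 2 * w.re) :
    ‖1 - 1 / (t : ℂ) - w / (t : ℂ) ^ 2 + w ^ 2 / (t : ℂ) ^ 4‖
      + 1 / (4 * t ^ ((3 : ℝ) / 2)) * √(t + 2 * w.re) ≤ 1 := by
  have ht0 : 0 < t := by linarith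
  set z : ℂ := w / ((t ^ 2 : ℝ) : ℂ) with hz_def
  have hzre : z.re = w.re / t ^ 2 := Complex.div_ofReal_re _ _
  have hA : 1 - 1 / (t : ℂ) - w / (t : ℂ) ^ 2 + w ^ 2 / (t : ℂ) ^ 4
      = 1 - ((1 / t : ℝ) : ℂ) - z + z ^ 2 := by
    rw [hz_def]; push_cast; ring
  have hz : ‖z‖ ≤ 1 / 2 := by
    rw [norm_div, Complex.norm_real, Real.norm_of_nonneg (by positivity),
      div_le_iff₀ (by positivity)]
    linarith
  have hεz : 0 ≤ 1 / t + 2 * z.re := by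
    rw [hzre, show 1 / t + 2 * (w.re / t ^ 2) = (t + 2 * w.re) / t ^ 2 by field_simp]
    positivity
  have hsqrt : 1 / (4 * t ^ ((3 : ℝ) / 2)) * √(t + 2 * w.re)
      = √(1 / t * (1 / t + 2 * z.re)) / 4 := by
    have ht3 : √(t ^ 3) = t ^ ((3 : ℝ) / 2) := by
      rw [Real.sqrt_eq_rpow, ← Real.rpow_natCast, ← Real.rpow_mul ht0.le]
      norm_num
    rw [hzre, show 1 / t * (1 / t + 2 * (w.re / t ^ 2)) = (t + 2 * w.re) / t ^ 3 by field_simp,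
      Real.sqrt_div' _ (by positivity), ht3]
    field_simp
  rw [hA, hsqrt]
  calc _ ≤ (1 - 1 / t - z.re + z.re ^ 2) + (1 / t + z.re - z.re ^ 2) := by
        gcongr
        · exact norm_one_sub_sub_add_sq_le (by rw [div_le_div_iff₀] <;> linarith) hz hεz
        · exact sqrt_mul_add_two_mul_div_four_le (by positivity)
            (by rw [div_le_one ht0]; linarith) ((Complex.re_le_norm z).trans hz) hεz
    _ = 1 := by ring

/-- The key pointwise bound in the Cohen–Davenport–Pichorides iteration. -/
theorem cdp_pointwise_bound (d t : ℕ) (ht : 100 ≤ t)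
    (Φ : Fin t → (Fin d → ℝ) → ℂ) (g : (Fin d → ℝ) → ℂ)
    (hΦ : ∀ j x, ‖Φ j x‖ ≤ 1) (hg : ∀ x, ‖g x‖ ≤ 1)
    (W : (Fin d → ℝ) → ℂ)
    (hW : ∀ x, W x = ∑ p ∈ Finset.univ.filter (fun p : Fin t × Fin t => p.1 < p.2),
        Φ p.1 x * (starRingEnd ℂ) (Φ p.2 x))
    (h : (Fin d → ℝ) → ℂ)
    (hh : ∀ x, h x = g x * (1 - 1 / (t : ℂ) - W x / (t : ℂ) ^ 2 + (W x) ^ 2 / (t : ℂ) ^ 4)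
        + (((1 / (4 * (t : ℝ) ^ ((3 : ℝ) / 2)) : ℝ) : ℂ)) * ∑ j, Φ j x) :
    ∀ x, ‖h x‖ ≤ 1 := by
  intro x
  have hW_le : ‖W x‖ ≤ (t : ℝ) ^ 2 / 2 := by
    simpa [← hW x] using RCLike.norm_sum_lt_mul_conj_le (hΦ · x)
  have hS : ‖∑ j, Φ j x‖ ^ 2 ≤ t + 2 * (W x).re := by
    rw [RCLike.norm_sum_sq_eq, ← hW x, RCLike.re_to_complex]
    gcongr
    calc ∑ j, ‖Φ j x‖ ^ 2 ≤ ∑ _j : Fin t, (1 : ℝ) :=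
          sum_le_sum fun j _ => pow_le_one₀ (norm_nonneg _) (hΦ j x)
      _ = t := by simp
  have key := pichorides_inequality_s11 (by norm_cast; omega) hW_le ((sq_nonneg _).trans hS)
  rw [Complex.ofReal_natCast] at key
  rw [hh x]
  calc _ ≤ ‖g x‖ * ‖1 - 1 / (t : ℂ) - W x / (t : ℂ) ^ 2 + (W x) ^ 2 / (t : ℂ) ^ 4‖
        + 1 / (4 * (t : ℝ) ^ ((3 : ℝ) / 2)) * ‖∑ j, Φ j x‖ := by
        refine (norm_add_le _ _).trans_eq ?_
        rw [norm_mul, norm_mul, Complex.norm_real, Real.norm_of_nonneg (by positivity)]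
    _ ≤ _ := by
        gcongr
        · exact mul_le_of_le_one_left (norm_nonneg _) (hg x)
        · exact Real.le_sqrt_of_sq_le hS
    _ ≤ 1 := key
end
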